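/- arXiv:0904.2060 — 11 statements merged into one kernel-verified Lean document; each statement's English description precedes it below -/
import Mathlib

section
/- In a 2-dimensional C-WMMG, every winning coalition C satisfies A_1(N) ⊆ C or A_2(N) ⊆ C. -/
/-- Competitive power of a coalition in a 2-dimensional C-WMMG with weights `w1, w2`. -/
def q {P : Type*} [DecidableEq P] (w1 w2 : P → ℕ) (C : Finset P) : ℕ :=
  C.sup w1 + C.sup w2

/-- A coalition is winning iff its power exceeds that of its complement. -/
def Winning {P : Type*} [Fintype P] [DecidableEq P] (w1 w2 : P → ℕ) (C : Finset P) : Prop :=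
  q w1 w2 Cᶜ < q w1 w2 C

/-- A minimal winning coalition: winning, and every proper subset is losing. -/
def MWC {P : Type*} [Fintype P] [DecidableEq P] (w1 w2 : P → ℕ) (C : Finset P) : Prop :=
  Winning w1 w2 C ∧ ∀ D ⊂ C, ¬ Winning w1 w2 D

/-- `Aset w C` is the set of members of `C` whose `w`-weight attains the maximum over `C`. -/
def Aset {P : Type*} [DecidableEq P] (w : P → ℕ) (C : Finset P) : Finset P :=
  C.filter (fun j => w j = C.sup w)

/-- In a 2-dimensional C-WMMG, every winning coalition `C` satisfies
`A_1(N) ⊆ C` or `A_2(N) ⊆ C`. -/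
theorem winning_contains_A1N_or_A2N {P : Type*} [Fintype P] [DecidableEq P]
    (w1 w2 : P → ℕ) (C : Finset P) (hC : Winning w1 w2 C) :
    Aset w1 Finset.univ ⊆ C ∨ Aset w2 Finset.univ ⊆ C := by
  by_contra h
  push_neg at h
  obtain ⟨h1, h2⟩ := h
  obtain ⟨j, hjA, hjC⟩ := Finset.not_subset.mp h1
  obtain ⟨k, hkA, hkC⟩ := Finset.not_subset.mp h2
  simp only [Aset, Finset.mem_filter] at hjA hkA
  have hj : j ∈ Cᶜ := Finset.mem_compl.mpr hjC
  have hk : k ∈ Cᶜ := Finset.mem_compl.mpr hkC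
  have h1' : C.sup w1 ≤ Cᶜ.sup w1 :=
    le_trans (Finset.sup_mono (Finset.subset_univ C)) (hjA.2 ▸ Finset.le_sup hj)
  have h2' : C.sup w2 ≤ Cᶜ.sup w2 :=
    le_trans (Finset.sup_mono (Finset.subset_univ C)) (hkA.2 ▸ Finset.le_sup hk)
  exact absurd hC (not_lt.mpr (Nat.add_le_add h1' h2'))
end

section
/- In a 2-dimensional C-WMMG, if A_1(N) ∩ A_2(N) ≠ ∅, then every minimal winning coalition equals A_1(N) or A_2(N); in particular there are at most two minimal winning coalitions. -/
/-!
Let `M₁, M₂` be the maximal weights over `N` and let `j` attain both. A winning coalition `C`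
has `q(Cᶜ) < q(C) ≤ M₁ + M₂`, so some coordinate, say the first, has `q₁(Cᶜ) < M₁`; then all of
`A₁(N)` lies in `C`. On the other hand `A₁(N)` is itself winning: it contains `j`, so its power
is `M₁ + M₂`, while its complement misses every maximiser of the first weight. By minimality,
`C = A₁(N)`.
-/

section

variable {P : Type*} [Fintype P] [DecidableEq P]

lemma mem_Aset_univ {w : P → ℕ} {j : P} : j ∈ Aset w Finset.univ ↔ w j = Finset.univ.sup w := by
  simp [Aset]

lemma winning_comm {w1 w2 : P → ℕ} {C : Finset P} : Winning w1 w2 C ↔ Winning w2 w1 C := by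
  simp only [Winning, q, add_comm]

lemma mwc_comm {w1 w2 : P → ℕ} {C : Finset P} : MWC w1 w2 C ↔ MWC w2 w1 C := by
  simp only [MWC, winning_comm]

lemma Winning.sup_compl_lt_or {w1 w2 : P → ℕ} {C : Finset P} (hC : Winning w1 w2 C) :
    Cᶜ.sup w1 < Finset.univ.sup w1 ∨ Cᶜ.sup w2 < Finset.univ.sup w2 := by
  have h1 : C.sup w1 ≤ Finset.univ.sup w1 := Finset.sup_mono (Finset.subset_univ C)
  have h2 : C.sup w2 ≤ Finset.univ.sup w2 := Finset.sup_mono (Finset.subset_univ C)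
  unfold Winning q at hC
  omega

lemma Aset_univ_subset_of_sup_compl_lt {w : P → ℕ} {C : Finset P}
    (h : Cᶜ.sup w < Finset.univ.sup w) : Aset w Finset.univ ⊆ C := by
  intro x hx
  by_contra hxC
  have : w x ≤ Cᶜ.sup w := Finset.le_sup (Finset.mem_compl.mpr hxC)
  rw [mem_Aset_univ] at hx
  omega

lemma sup_compl_Aset_univ_lt {w : P → ℕ} (hpos : 0 < Finset.univ.sup w) :
    (Aset w Finset.univ)ᶜ.sup w < Finset.univ.sup w := by
  refine (Finset.sup_lt_iff hpos).mpr fun x hx => ?_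
  have hne : w x ≠ Finset.univ.sup w := fun h =>
    Finset.mem_compl.mp hx (mem_Aset_univ.mpr h)
  exact (Finset.le_sup (Finset.mem_univ x)).lt_of_ne hne

lemma winning_Aset_univ {w1 w2 : P → ℕ}
    (hmeet : (Aset w1 Finset.univ ∩ Aset w2 Finset.univ).Nonempty)
    (hpos : 0 < Finset.univ.sup w1) : Winning w1 w2 (Aset w1 Finset.univ) := by
  obtain ⟨j, hj⟩ := hmeet
  obtain ⟨hj1, hj2⟩ := Finset.mem_inter.mp hj
  have hsup1 : Finset.univ.sup w1 ≤ (Aset w1 Finset.univ).sup w1 :=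
    mem_Aset_univ.mp hj1 ▸ Finset.le_sup hj1
  have hsup2 : Finset.univ.sup w2 ≤ (Aset w1 Finset.univ).sup w2 :=
    mem_Aset_univ.mp hj2 ▸ Finset.le_sup hj1
  have hcompl1 := sup_compl_Aset_univ_lt hpos
  have hcompl2 : (Aset w1 Finset.univ)ᶜ.sup w2 ≤ Finset.univ.sup w2 :=
    Finset.sup_mono (Finset.subset_univ _)
  unfold Winning q
  omega

lemma MWC.eq_Aset_univ_of_sup_compl_lt {w1 w2 : P → ℕ} {C : Finset P} (hC : MWC w1 w2 C)
    (hmeet : (Aset w1 Finset.univ ∩ Aset w2 Finset.univ).Nonempty)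
    (h : Cᶜ.sup w1 < Finset.univ.sup w1) : C = Aset w1 Finset.univ := by
  have hwin := winning_Aset_univ (w2 := w2) hmeet (Nat.zero_lt_of_lt h)
  rcases (Aset_univ_subset_of_sup_compl_lt h).ssubset_or_eq with hlt | heq
  · exact absurd hwin (hC.2 _ hlt)
  · exact heq.symm

lemma MWC.eq_Aset_univ_or_eq_Aset_univ {w1 w2 : P → ℕ} {C : Finset P} (hC : MWC w1 w2 C)
    (hmeet : (Aset w1 Finset.univ ∩ Aset w2 Finset.univ).Nonempty) :
    C = Aset w1 Finset.univ ∨ C = Aset w2 Finset.univ := by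
  rcases hC.1.sup_compl_lt_or with h | h
  · exact Or.inl (hC.eq_Aset_univ_of_sup_compl_lt hmeet h)
  · rw [Finset.inter_comm] at hmeet
    exact Or.inr ((mwc_comm.mp hC).eq_Aset_univ_of_sup_compl_lt hmeet h)

end

/-- In a 2-dimensional C-WMMG, if `A_1(N) ∩ A_2(N) ≠ ∅`, then every minimal winning
coalition equals `A_1(N)` or `A_2(N)`; in particular there are at most two minimal
winning coalitions. -/
theorem mwc_of_A1N_inter_A2N_nonempty {P : Type*} [Fintype P] [DecidableEq P]
    (w1 w2 : P → ℕ)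
    (hmeet : (Aset w1 Finset.univ ∩ Aset w2 Finset.univ).Nonempty) :
    (∀ C : Finset P, MWC w1 w2 C →
      C = Aset w1 Finset.univ ∨ C = Aset w2 Finset.univ) ∧
    {C : Finset P | MWC w1 w2 C}.ncard ≤ 2 := by
  have hmwc : ∀ C : Finset P, MWC w1 w2 C →
      C = Aset w1 Finset.univ ∨ C = Aset w2 Finset.univ :=
    fun C hC => hC.eq_Aset_univ_or_eq_Aset_univ hmeet
  refine ⟨hmwc, ?_⟩
  have hsub : {C : Finset P | MWC w1 w2 C} ⊆ {Aset w1 Finset.univ, Aset w2 Finset.univ} :=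
    fun C hC => hmwc C hC
  calc {C : Finset P | MWC w1 w2 C}.ncard
      ≤ ({Aset w1 Finset.univ, Aset w2 Finset.univ} : Set (Finset P)).ncard :=
        Set.ncard_le_ncard hsub (Set.toFinite _)
    _ ≤ ({Aset w2 Finset.univ} : Set (Finset P)).ncard + 1 := Set.ncard_insert_le _ _
    _ = 2 := by rw [Set.ncard_singleton]
end

section
/- In a 2-dimensional C-WMMG, if C is a minimal winning coalition with C ∩ A_1(N) ≠ ∅ and C ∩ A_2(N) ≠ ∅, then C = A_1(N) ∪ {x} for some x ∈ A_2(N) or C = A_2(N) ∪ {x} for some x ∈ A_1(N); consequently, the number of minimal winning coalitions intersecting both A_1(N) and A_2(N) is at most |A_1(N)| + |A_2(N)|. -/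
/-- In a 2-dimensional C-WMMG, every minimal winning coalition meeting both `A_1(N)` and
`A_2(N)` is of the form `A_1(N) ∪ {x}` with `x ∈ A_2(N)` or `A_2(N) ∪ {x}` with
`x ∈ A_1(N)`; consequently, there are at most `|A_1(N)| + |A_2(N)|` such minimal
winning coalitions. -/
theorem mwc_meeting_both {P : Type*} [Fintype P] [DecidableEq P] (w1 w2 : P → ℕ) :
    (∀ C : Finset P, MWC w1 w2 C →
      (C ∩ Aset w1 Finset.univ).Nonempty → (C ∩ Aset w2 Finset.univ).Nonempty →
      (∃ x ∈ Aset w2 Finset.univ, C = insert x (Aset w1 Finset.univ)) ∨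
      (∃ x ∈ Aset w1 Finset.univ, C = insert x (Aset w2 Finset.univ))) ∧
    {C : Finset P | MWC w1 w2 C ∧ (C ∩ Aset w1 Finset.univ).Nonempty ∧
        (C ∩ Aset w2 Finset.univ).Nonempty}.ncard ≤
      (Aset w1 Finset.univ).card + (Aset w2 Finset.univ).card := by
  classical
  have hmemA : ∀ (w : P → ℕ) (j : P),
      j ∈ Aset w (Finset.univ : Finset P) ↔ w j = Finset.univ.sup w := by
    intro w j; simp [Aset]
  have supC : ∀ (w : P → ℕ) (C : Finset P),
      (C ∩ Aset w Finset.univ).Nonempty → C.sup w = Finset.univ.sup w := by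
    rintro w C ⟨a, ha⟩
    rw [Finset.mem_inter] at ha
    refine le_antisymm (Finset.sup_mono (Finset.subset_univ C)) ?_
    have h := (hmemA w a).mp ha.2
    calc Finset.univ.sup w = w a := h.symm
      _ ≤ C.sup w := Finset.le_sup ha.1
  have supLT : ∀ (w : P → ℕ) (D : Finset P), D.Nonempty →
      (∀ j ∈ D, j ∉ Aset w Finset.univ) → D.sup w < Finset.univ.sup w := by
    intro w D hne hdisj
    refine lt_of_le_of_ne (Finset.sup_mono (Finset.subset_univ D)) ?_
    intro heq
    obtain ⟨j, hj, hjsup⟩ := Finset.exists_mem_eq_sup D hne w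
    exact hdisj j hj ((hmemA w j).mpr (by rw [← hjsup, heq]))
  have key : ∀ C : Finset P, MWC w1 w2 C →
      (C ∩ Aset w1 Finset.univ).Nonempty → (C ∩ Aset w2 Finset.univ).Nonempty →
      (∃ x ∈ Aset w2 Finset.univ, C = insert x (Aset w1 Finset.univ)) ∨
      (∃ x ∈ Aset w1 Finset.univ, C = insert x (Aset w2 Finset.univ)) := by
    intro C hC h1 h2
    have hqC : q w1 w2 C = Finset.univ.sup w1 + Finset.univ.sup w2 := by
      unfold q; rw [supC w1 C h1, supC w2 C h2]
    have hwin : q w1 w2 Cᶜ < Finset.univ.sup w1 + Finset.univ.sup w2 := by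
      rw [← hqC]; exact hC.1
    have hpos : 0 < Finset.univ.sup w1 + Finset.univ.sup w2 :=
      lt_of_le_of_lt (Nat.zero_le _) hwin
    -- A1 ⊆ C or A2 ⊆ C
    have hsub : Aset w1 Finset.univ ⊆ C ∨ Aset w2 Finset.univ ⊆ C := by
      by_contra h
      push_neg at h
      obtain ⟨a, ha, haC⟩ := Finset.not_subset.mp h.1
      obtain ⟨b, hb, hbC⟩ := Finset.not_subset.mp h.2
      have hanC : a ∈ Cᶜ := Finset.mem_compl.mpr haC
      have hbnC : b ∈ Cᶜ := Finset.mem_compl.mpr hbC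
      have hq1 : (Cᶜ).sup w1 = Finset.univ.sup w1 :=
        supC w1 Cᶜ ⟨a, Finset.mem_inter.mpr ⟨hanC, ha⟩⟩
      have hq2 : (Cᶜ).sup w2 = Finset.univ.sup w2 :=
        supC w2 Cᶜ ⟨b, Finset.mem_inter.mpr ⟨hbnC, hb⟩⟩
      have : q w1 w2 Cᶜ = Finset.univ.sup w1 + Finset.univ.sup w2 := by
        unfold q; rw [hq1, hq2]
      omega
    -- helper to finish a case
    have finish : ∀ (x : P) (A : Finset P), x ∈ C → A ⊆ C →
        ((insert x A ∩ Aset w1 Finset.univ).Nonempty) →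
        ((insert x A ∩ Aset w2 Finset.univ).Nonempty) →
        (∀ j, j ∈ Aset w1 Finset.univ → j ∈ insert x A) ∨
          (∀ j, j ∈ Aset w2 Finset.univ → j ∈ insert x A) →
        C = insert x A := by
      intro x A hxC hAC hD1 hD2 hcov
      set D := insert x A with hD
      have hDC : D ⊆ C := Finset.insert_subset hxC hAC
      have hqD : q w1 w2 D = Finset.univ.sup w1 + Finset.univ.sup w2 := by
        unfold q; rw [supC w1 D hD1, supC w2 D hD2]
      have hWinD : Winning w1 w2 D := by
        unfold Winning
        rw [hqD]
        rcases Finset.eq_empty_or_nonempty Dᶜ with he | hne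
        · simp [q, he, hpos]
        · rcases hcov with hcov | hcov
          · have hlt : (Dᶜ).sup w1 < Finset.univ.sup w1 := by
              refine supLT w1 Dᶜ hne ?_
              intro j hj hjA
              exact (Finset.mem_compl.mp hj) (hcov j hjA)
            have hle : (Dᶜ).sup w2 ≤ Finset.univ.sup w2 :=
              Finset.sup_mono (Finset.subset_univ _)
            unfold q; omega
          · have hlt : (Dᶜ).sup w2 < Finset.univ.sup w2 := by
              refine supLT w2 Dᶜ hne ?_
              intro j hj hjA
              exact (Finset.mem_compl.mp hj) (hcov j hjA)
            have hle : (Dᶜ).sup w1 ≤ Finset.univ.sup w1 :=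
              Finset.sup_mono (Finset.subset_univ _)
            unfold q; omega
      by_contra hne
      exact hC.2 D (lt_of_le_of_ne hDC (fun h => hne h.symm)) hWinD
    obtain ⟨a1, ha1⟩ := h1
    obtain ⟨a2, ha2⟩ := h2
    rw [Finset.mem_inter] at ha1 ha2
    rcases hsub with hs | hs
    · left
      refine ⟨a2, ha2.2, finish a2 (Aset w1 Finset.univ) ha2.1 hs ?_ ?_ ?_⟩
      · exact ⟨a1, Finset.mem_inter.mpr ⟨Finset.mem_insert_of_mem ha1.2, ha1.2⟩⟩
      · exact ⟨a2, Finset.mem_inter.mpr ⟨Finset.mem_insert_self _ _, ha2.2⟩⟩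
      · exact Or.inl (fun j hj => Finset.mem_insert_of_mem hj)
    · right
      refine ⟨a1, ha1.2, finish a1 (Aset w2 Finset.univ) ha1.1 hs ?_ ?_ ?_⟩
      · exact ⟨a1, Finset.mem_inter.mpr ⟨Finset.mem_insert_self _ _, ha1.2⟩⟩
      · exact ⟨a2, Finset.mem_inter.mpr ⟨Finset.mem_insert_of_mem ha2.2, ha2.2⟩⟩
      · exact Or.inr (fun j hj => Finset.mem_insert_of_mem hj)
  refine ⟨key, ?_⟩
  set F : Finset (Finset P) :=
    (Aset w1 Finset.univ).image (fun x => insert x (Aset w2 Finset.univ)) ∪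
    (Aset w2 Finset.univ).image (fun x => insert x (Aset w1 Finset.univ)) with hF
  have hsubS : {C : Finset P | MWC w1 w2 C ∧ (C ∩ Aset w1 Finset.univ).Nonempty ∧
      (C ∩ Aset w2 Finset.univ).Nonempty} ⊆ (↑F : Set (Finset P)) := by
    rintro C ⟨hC, h1, h2⟩
    rcases key C hC h1 h2 with ⟨x, hx, hCx⟩ | ⟨x, hx, hCx⟩
    · exact Finset.mem_coe.mpr (Finset.mem_union_right _
        (Finset.mem_image.mpr ⟨x, hx, hCx.symm⟩))
    · exact Finset.mem_coe.mpr (Finset.mem_union_left _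
        (Finset.mem_image.mpr ⟨x, hx, hCx.symm⟩))
  calc {C : Finset P | MWC w1 w2 C ∧ (C ∩ Aset w1 Finset.univ).Nonempty ∧
      (C ∩ Aset w2 Finset.univ).Nonempty}.ncard
      ≤ (↑F : Set (Finset P)).ncard := Set.ncard_le_ncard hsubS F.finite_toSet
    _ = F.card := Set.ncard_coe_finset F
    _ ≤ ((Aset w1 Finset.univ).image (fun x => insert x (Aset w2 Finset.univ))).card +
        ((Aset w2 Finset.univ).image (fun x => insert x (Aset w1 Finset.univ))).card :=
          Finset.card_union_le _ _
    _ ≤ (Aset w1 Finset.univ).card + (Aset w2 Finset.univ).card :=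
          Nat.add_le_add (Finset.card_image_le) (Finset.card_image_le)
end

section
/- In a 2-dimensional C-WMMG with A_1(N) ∩ A_2(N) = ∅, for every p_i ∈ M the family MWC1_i contains at most one coalition, and every member of MWC1_i equals C_{1i}; moreover, C_{1i} ∈ MWC1_i if and only if C_{1i} is a winning coalition and p_i is both swing and busy in C_{1i}. -/
/-- `B C = A_1(C) ∪ A_2(C)`: the busy players of `C`. -/
def Bset {P : Type*} [DecidableEq P] (w1 w2 : P → ℕ) (C : Finset P) : Finset P :=
  Aset w1 C ∪ Aset w2 C

/-- `M = N ∖ B(N)`: the players idle in the grand coalition. -/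
def Mset {P : Type*} [Fintype P] [DecidableEq P] (w1 w2 : P → ℕ) : Finset P :=
  Finset.univ \ Bset w1 w2 Finset.univ

/-- `D_{1i} = {p_t ∈ M : p_t^1 + q_2(N) ≥ p_i^2 + q_1(N)}`. -/
def D1 {P : Type*} [Fintype P] [DecidableEq P] (w1 w2 : P → ℕ) (i : P) : Finset P :=
  (Mset w1 w2).filter
    (fun t => w2 i + (Finset.univ : Finset P).sup w1 ≤ w1 t + (Finset.univ : Finset P).sup w2)

/-- `C_{1i} = A_1(N) ∪ {p_i} ∪ D_{1i}`. -/
def C1 {P : Type*} [Fintype P] [DecidableEq P] (w1 w2 : P → ℕ) (i : P) : Finset P :=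
  insert i (Aset w1 Finset.univ ∪ D1 w1 w2 i)

/-- A player `j` is swing in a coalition `C` if `j ∈ C` and `C ∖ {j}` is losing. -/
def Swing {P : Type*} [Fintype P] [DecidableEq P] (w1 w2 : P → ℕ) (j : P) (C : Finset P) : Prop :=
  j ∈ C ∧ ¬ Winning w1 w2 (C.erase j)

lemma winning_mono {P : Type*} [Fintype P] [DecidableEq P] (w1 w2 : P → ℕ)
    {D E : Finset P} (h : D ⊆ E) (hD : Winning w1 w2 D) : Winning w1 w2 E := by
  unfold Winning q at *
  have h1 : D.sup w1 ≤ E.sup w1 := Finset.sup_mono h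
  have h2 : D.sup w2 ≤ E.sup w2 := Finset.sup_mono h
  have hc : Eᶜ ⊆ Dᶜ := Finset.compl_subset_compl.mpr h
  have h3 : Eᶜ.sup w1 ≤ Dᶜ.sup w1 := Finset.sup_mono hc
  have h4 : Eᶜ.sup w2 ≤ Dᶜ.sup w2 := Finset.sup_mono hc
  omega

lemma mem_Aset {P : Type*} [DecidableEq P] (w : P → ℕ) (C : Finset P) (j : P) :
    j ∈ Aset w C ↔ j ∈ C ∧ w j = C.sup w := by
  simp [Aset]

/-- In a 2-dim C-WMMG with `A_1(N) ∩ A_2(N) = ∅` and `p_i ∈ M`: every member of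
`MWC1_i = {C ∈ MWC : A_1(C) = A_1(N), p_i ∈ A_2(C)}` equals `C_{1i}` (so `MWC1_i`
has at most one member), and `C_{1i} ∈ MWC1_i` iff `C_{1i}` is winning and `p_i`
is both swing and busy in `C_{1i}`. -/
theorem mwc1_unique_and_characterization {P : Type*} [Fintype P] [DecidableEq P]
    (w1 w2 : P → ℕ)
    (hdisj : Aset w1 Finset.univ ∩ Aset w2 Finset.univ = ∅)
    (i : P) (hi : i ∈ Mset w1 w2) :
    (∀ C : Finset P,
        (MWC w1 w2 C ∧ Aset w1 C = Aset w1 Finset.univ ∧ i ∈ Aset w2 C) →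
        C = C1 w1 w2 i) ∧
    ((MWC w1 w2 (C1 w1 w2 i) ∧ Aset w1 (C1 w1 w2 i) = Aset w1 Finset.univ ∧
        i ∈ Aset w2 (C1 w1 w2 i)) ↔
      (Winning w1 w2 (C1 w1 w2 i) ∧ Swing w1 w2 i (C1 w1 w2 i) ∧
        i ∈ Bset w1 w2 (C1 w1 w2 i))) := by
  classical
  have hi' : w1 i ≠ (Finset.univ : Finset P).sup w1 ∧
      w2 i ≠ (Finset.univ : Finset P).sup w2 := by
    simp [Mset, Bset, Aset] at hi
    exact hi
  have hi1 : w1 i < (Finset.univ : Finset P).sup w1 :=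
    lt_of_le_of_ne (Finset.le_sup (Finset.mem_univ i)) hi'.1
  have hi2 : w2 i < (Finset.univ : Finset P).sup w2 :=
    lt_of_le_of_ne (Finset.le_sup (Finset.mem_univ i)) hi'.2
  obtain ⟨a1, -, ha1⟩ :=
    Finset.exists_mem_eq_sup (Finset.univ : Finset P) ⟨i, Finset.mem_univ i⟩ w1
  obtain ⟨a2, -, ha2⟩ :=
    Finset.exists_mem_eq_sup (Finset.univ : Finset P) ⟨i, Finset.mem_univ i⟩ w2
  have hdisjf : ∀ j : P, w1 j = (Finset.univ : Finset P).sup w1 →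
      w2 j ≠ (Finset.univ : Finset P).sup w2 := by
    intro j h1 h2
    have hj : j ∈ Aset w1 (Finset.univ : Finset P) ∩ Aset w2 (Finset.univ : Finset P) := by
      rw [Finset.mem_inter, mem_Aset, mem_Aset]
      exact ⟨⟨Finset.mem_univ j, h1⟩, ⟨Finset.mem_univ j, h2⟩⟩
    rw [hdisj] at hj
    exact absurd hj (Finset.notMem_empty j)
  have hD1 : ∀ t ∈ D1 w1 w2 i, w1 t ≠ (Finset.univ : Finset P).sup w1 ∧
      w2 t ≠ (Finset.univ : Finset P).sup w2 ∧
      w2 i + (Finset.univ : Finset P).sup w1 ≤ w1 t + (Finset.univ : Finset P).sup w2 := by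
    intro t ht
    simp [D1, Mset, Bset, Aset] at ht
    tauto
  have ha1A : a1 ∈ Aset w1 (Finset.univ : Finset P) :=
    (mem_Aset w1 _ a1).mpr ⟨Finset.mem_univ a1, ha1.symm⟩
  have hiC1 : i ∈ C1 w1 w2 i := Finset.mem_insert_self i _
  have ha1C1 : a1 ∈ C1 w1 w2 i :=
    Finset.mem_insert_of_mem (Finset.mem_union_left _ ha1A)
  have hsup1C1 : (C1 w1 w2 i).sup w1 = (Finset.univ : Finset P).sup w1 := by
    apply le_antisymm (Finset.sup_mono (Finset.subset_univ _))
    rw [ha1]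
    exact Finset.le_sup ha1C1
  have hC1lt2 : ∀ j ∈ C1 w1 w2 i, w2 j < (Finset.univ : Finset P).sup w2 := by
    intro j hj
    rcases Finset.mem_insert.mp hj with h | h
    · exact h ▸ hi2
    rcases Finset.mem_union.mp h with h | h
    · exact lt_of_le_of_ne (Finset.le_sup (Finset.mem_univ j))
        (hdisjf j ((mem_Aset w1 _ j).mp h).2)
    · exact lt_of_le_of_ne (Finset.le_sup (Finset.mem_univ j)) (hD1 j h).2.1
  have ha2nC1 : a2 ∉ C1 w1 w2 i := by
    intro h
    have := hC1lt2 a2 h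
    omega
  have hA1C1 : Aset w1 (C1 w1 w2 i) = Aset w1 (Finset.univ : Finset P) := by
    ext j
    rw [mem_Aset, mem_Aset, hsup1C1]
    constructor
    · rintro ⟨-, h⟩
      exact ⟨Finset.mem_univ j, h⟩
    · rintro ⟨-, h⟩
      exact ⟨Finset.mem_insert_of_mem (Finset.mem_union_left _
        ((mem_Aset w1 _ j).mpr ⟨Finset.mem_univ j, h⟩)), h⟩
  have claim1 : ∀ C : Finset P,
      (MWC w1 w2 C ∧ Aset w1 C = Aset w1 Finset.univ ∧ i ∈ Aset w2 C) →
      C = C1 w1 w2 i := by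
    rintro C ⟨⟨hCwin, hCmin⟩, hA1, hiA2⟩
    have hiC : i ∈ C := ((mem_Aset w2 C i).mp hiA2).1
    have hsup2C : C.sup w2 = w2 i := (((mem_Aset w2 C i).mp hiA2).2).symm
    have ha1AC : a1 ∈ Aset w1 C := by rw [hA1]; exact ha1A
    have ha1C : a1 ∈ C := ((mem_Aset w1 C a1).mp ha1AC).1
    have hsup1C : C.sup w1 = (Finset.univ : Finset P).sup w1 := by
      apply le_antisymm (Finset.sup_mono (Finset.subset_univ _))
      rw [ha1]
      exact Finset.le_sup ha1C
    have hwub : ∀ j ∈ C, w2 j ≤ w2 i := fun j hj => hsup2C ▸ Finset.le_sup hj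
    have ha2nC : a2 ∉ C := by
      intro h
      have := hwub a2 h
      omega
    have hsup2Cc : Cᶜ.sup w2 = (Finset.univ : Finset P).sup w2 := by
      apply le_antisymm (Finset.sup_mono (Finset.subset_univ _))
      rw [ha2]
      exact Finset.le_sup (Finset.mem_compl.mpr ha2nC)
    have hkey : ∀ t, t ∉ C →
        w1 t + (Finset.univ : Finset P).sup w2 <
          w2 i + (Finset.univ : Finset P).sup w1 := by
      intro t ht
      have h1 : w1 t ≤ Cᶜ.sup w1 := Finset.le_sup (Finset.mem_compl.mpr ht)
      have h2 := hCwin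
      unfold Winning q at h2
      rw [hsup2Cc, hsup1C, hsup2C] at h2
      omega
    apply Finset.Subset.antisymm
    · intro j hj
      by_contra hjC1
      have hjne : j ≠ i := fun h => hjC1 (h ▸ hiC1)
      have hjA1 : w1 j ≠ (Finset.univ : Finset P).sup w1 := by
        intro h
        exact hjC1 (Finset.mem_insert_of_mem (Finset.mem_union_left _
          ((mem_Aset w1 _ j).mpr ⟨Finset.mem_univ j, h⟩)))
      have hjD1 : j ∉ D1 w1 w2 i := fun h =>
        hjC1 (Finset.mem_insert_of_mem (Finset.mem_union_right _ h))
      have hjM : j ∈ Mset w1 w2 := by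
        simp [Mset, Bset, Aset]
        refine ⟨hjA1, ?_⟩
        intro h
        have := hwub j hj
        omega
      have hjineq : w1 j + (Finset.univ : Finset P).sup w2 <
          w2 i + (Finset.univ : Finset P).sup w1 := by
        have hnot : ¬ (w2 i + (Finset.univ : Finset P).sup w1 ≤
            w1 j + (Finset.univ : Finset P).sup w2) := by
          intro hle
          exact hjD1 (Finset.mem_filter.mpr ⟨hjM, hle⟩)
        omega
      apply hCmin _ (Finset.erase_ssubset hj)
      have hiC' : i ∈ C.erase j := Finset.mem_erase.mpr ⟨Ne.symm hjne, hiC⟩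
      have ha1C' : a1 ∈ C.erase j := by
        refine Finset.mem_erase.mpr ⟨?_, ha1C⟩
        intro h
        exact hjA1 (h ▸ ha1.symm)
      have hs1 : (C.erase j).sup w1 = (Finset.univ : Finset P).sup w1 := by
        apply le_antisymm (Finset.sup_mono (Finset.subset_univ _))
        rw [ha1]
        exact Finset.le_sup ha1C'
      have hs2 : (C.erase j).sup w2 = w2 i :=
        le_antisymm (le_trans (Finset.sup_mono (Finset.erase_subset j C)) hsup2C.le)
          (Finset.le_sup hiC')
      have ha2nC' : a2 ∈ (C.erase j)ᶜ :=
        Finset.mem_compl.mpr (fun h => ha2nC (Finset.erase_subset j C h))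
      have hc2 : (C.erase j)ᶜ.sup w2 = (Finset.univ : Finset P).sup w2 := by
        apply le_antisymm (Finset.sup_mono (Finset.subset_univ _))
        rw [ha2]
        exact Finset.le_sup ha2nC'
      obtain ⟨t, htmem, htv⟩ :=
        Finset.exists_mem_eq_sup ((C.erase j)ᶜ) ⟨a2, ha2nC'⟩ w1
      have htE : t ∉ C.erase j := Finset.mem_compl.mp htmem
      have htineq : w1 t + (Finset.univ : Finset P).sup w2 <
          w2 i + (Finset.univ : Finset P).sup w1 := by
        by_cases h : t = j
        · exact h ▸ hjineq
        · refine hkey t ?_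
          intro hC
          exact htE (Finset.mem_erase.mpr ⟨h, hC⟩)
      unfold Winning q
      rw [hs1, hs2, hc2, htv]
      omega
    · intro j hj
      rcases Finset.mem_insert.mp hj with h | h
      · exact h ▸ hiC
      rcases Finset.mem_union.mp h with h | h
      · have hjA : j ∈ Aset w1 C := by rw [hA1]; exact h
        exact ((mem_Aset w1 C j).mp hjA).1
      · by_contra hjC
        have h1 := hkey j hjC
        have h2 := (hD1 j h).2.2
        omega
  refine ⟨claim1, ?_, ?_⟩
  · rintro ⟨⟨hwin, hmin⟩, hA1, hiA2⟩
    refine ⟨hwin, ⟨hiC1, hmin _ (Finset.erase_ssubset hiC1)⟩, ?_⟩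
    exact Finset.mem_union_right _ hiA2
  · rintro ⟨hwin, ⟨-, hswing⟩, hbusy⟩
    have hiA2 : i ∈ Aset w2 (C1 w1 w2 i) := by
      rcases Finset.mem_union.mp hbusy with h | h
      · exfalso
        have := ((mem_Aset w1 _ i).mp h).2
        rw [hsup1C1] at this
        omega
      · exact h
    have hsup2C1 : (C1 w1 w2 i).sup w2 = w2 i :=
      (((mem_Aset w2 _ i).mp hiA2).2).symm
    refine ⟨⟨hwin, ?_⟩, hA1C1, hiA2⟩
    intro D hD hDwin
    obtain ⟨j, hjC1, hjD⟩ := Finset.exists_of_ssubset hD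
    have hDsub : D ⊆ (C1 w1 w2 i).erase j := Finset.subset_erase.mpr ⟨hD.subset, hjD⟩
    have hEwin : Winning w1 w2 ((C1 w1 w2 i).erase j) := winning_mono w1 w2 hDsub hDwin
    have ha2E : a2 ∈ ((C1 w1 w2 i).erase j)ᶜ :=
      Finset.mem_compl.mpr (fun h => ha2nC1 (Finset.erase_subset j _ h))
    have hc2 : (Finset.univ : Finset P).sup w2 ≤ ((C1 w1 w2 i).erase j)ᶜ.sup w2 := by
      rw [ha2]
      exact Finset.le_sup ha2E
    have hjE : j ∈ ((C1 w1 w2 i).erase j)ᶜ :=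
      Finset.mem_compl.mpr (Finset.notMem_erase j _)
    have h3 : ((C1 w1 w2 i).erase j).sup w1 ≤ (Finset.univ : Finset P).sup w1 :=
      Finset.sup_mono (Finset.subset_univ _)
    have h4 : ((C1 w1 w2 i).erase j).sup w2 ≤ w2 i :=
      le_trans (Finset.sup_mono (Finset.erase_subset j _)) hsup2C1.le
    unfold Winning q at hEwin
    rcases Finset.mem_insert.mp hjC1 with hji | hj
    · subst hji
      exact hswing hEwin
    rcases Finset.mem_union.mp hj with h | h
    · have hw1j : w1 j = (Finset.univ : Finset P).sup w1 := ((mem_Aset w1 _ j).mp h).2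
      have h1 : (Finset.univ : Finset P).sup w1 ≤ ((C1 w1 w2 i).erase j)ᶜ.sup w1 := by
        rw [← hw1j]
        exact Finset.le_sup hjE
      omega
    · have hineq := (hD1 j h).2.2
      have h1 : w1 j ≤ ((C1 w1 w2 i).erase j)ᶜ.sup w1 := Finset.le_sup hjE
      omega
end

section
/- In a 2-dimensional C-WMMG with A_1(N) ∩ A_2(N) = ∅, let p_i ∈ M and E ⊆ E_{1i}, and suppose C = C_{1i} ∪ E is winning with p_i ∈ A_2(C). Then every player of A_1(N) ∪ D_{1i} is swing in C, and every player of E is null in C. -/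
/-- `E_{1i} = {p_j ∈ M ∖ C_{1i} : p_j^2 ≤ p_i^2}`. -/
def E1 {P : Type*} [Fintype P] [DecidableEq P] (w1 w2 : P → ℕ) (i : P) : Finset P :=
  (Mset w1 w2 \ C1 w1 w2 i).filter (fun j => w2 j ≤ w2 i)

/-- `WC1_i = {C ⊆ N : C winning, A_1(C) = A_1(N), p_i ∈ A_2(C)}`. -/
def WC1 {P : Type*} [Fintype P] [DecidableEq P] (w1 w2 : P → ℕ) (i : P) :
    Set (Finset P) :=
  {C | Winning w1 w2 C ∧ Aset w1 C = Aset w1 Finset.univ ∧ i ∈ Aset w2 C}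

/-- A player `j` is null in a coalition `C` if `j ∈ C` and `C ∖ {j}` is still winning. -/
def NullIn {P : Type*} [Fintype P] [DecidableEq P] (w1 w2 : P → ℕ) (j : P) (C : Finset P) :
    Prop :=
  j ∈ C ∧ Winning w1 w2 (C.erase j)

open Finset

section

variable {P : Type*} [DecidableEq P]

theorem mem_aset {w : P → ℕ} {C : Finset P} {j : P} : j ∈ Aset w C ↔ j ∈ C ∧ w j = C.sup w :=
  mem_filter

theorem sup_eq_of_mem_aset {w : P → ℕ} {s t : Finset P} (hst : s ⊆ t) {a : P} (ha : a ∈ s)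
    (haA : a ∈ Aset w t) : s.sup w = t.sup w :=
  le_antisymm (sup_mono hst) ((mem_aset.1 haA).2 ▸ le_sup ha)

theorem sup_eq_of_aset_subset {w : P → ℕ} {s t : Finset P} (hst : s ⊆ t) (ht : t.Nonempty)
    (hA : Aset w t ⊆ s) : s.sup w = t.sup w := by
  obtain ⟨a, hat, hmax⟩ := exists_mem_eq_sup t ht w
  have haA : a ∈ Aset w t := mem_aset.2 ⟨hat, hmax.symm⟩
  exact sup_eq_of_mem_aset hst (hA haA) haA

end

section

variable {P : Type*} [Fintype P] [DecidableEq P] (w1 w2 : P → ℕ)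

theorem mem_mset {j : P} :
    j ∈ Mset w1 w2 ↔ j ∉ Aset w1 univ ∧ j ∉ Aset w2 univ := by
  simp [Mset, Bset]

theorem swing_of_le {C : Finset P} {j : P} (hj : j ∈ C)
    (hle : q w1 w2 C ≤ w1 j + Cᶜ.sup w2) : Swing w1 w2 j C := by
  refine ⟨hj, not_lt.2 ?_⟩
  rw [compl_erase]
  calc q w1 w2 (C.erase j) ≤ q w1 w2 C :=
        add_le_add (sup_mono (erase_subset j C)) (sup_mono (erase_subset j C))
    _ ≤ w1 j + Cᶜ.sup w2 := hle
    _ ≤ q w1 w2 (insert j Cᶜ) :=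
        add_le_add (le_sup (mem_insert_self j _)) (sup_mono (subset_insert j _))

theorem nullIn_of_lt {C : Finset P} {j : P} (hwin : Winning w1 w2 C) (hj : j ∈ C)
    (hsup1 : (C.erase j).sup w1 = C.sup w1) (hsup2 : (C.erase j).sup w2 = C.sup w2)
    (hj2 : w2 j ≤ Cᶜ.sup w2) (hj1 : w1 j + Cᶜ.sup w2 < q w1 w2 C) : NullIn w1 w2 j C := by
  refine ⟨hj, ?_⟩
  unfold Winning at hwin ⊢
  rw [q, q] at *
  rw [compl_erase, sup_insert, sup_insert, hsup1, hsup2, max_eq_right hj2]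
  omega

theorem aset_subset_c1 (i : P) : Aset w1 univ ⊆ C1 w1 w2 i :=
  fun _ ha => mem_insert_of_mem (mem_union_left _ ha)

theorem e1_subset_mset (i : P) : E1 w1 w2 i ⊆ Mset w1 w2 :=
  (filter_subset _ _).trans sdiff_subset

theorem ne_of_mem_e1 {i j : P} (hj : j ∈ E1 w1 w2 i) : j ≠ i := by
  rintro rfl
  exact (mem_sdiff.1 (mem_filter.1 hj).1).2 (mem_insert_self j _)

theorem add_sup_lt_of_mem_e1 {i j : P} (hj : j ∈ E1 w1 w2 i) :
    w1 j + univ.sup w2 < w2 i + univ.sup w1 := by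
  obtain ⟨hjM, hjC1⟩ := mem_sdiff.1 (mem_filter.1 hj).1
  by_contra! hD
  exact hjC1 (mem_insert_of_mem (mem_union_right _ (mem_filter.2 ⟨hjM, hD⟩)))

theorem disjoint_c1_union_aset (hdisj : Aset w1 univ ∩ Aset w2 univ = ∅) {i : P}
    (hi : i ∈ Mset w1 w2) {E : Finset P} (hE : E ⊆ E1 w1 w2 i) :
    Disjoint (C1 w1 w2 i ∪ E) (Aset w2 univ) := by
  have hM : Disjoint (Mset w1 w2) (Aset w2 univ) :=
    disjoint_left.2 fun _ hj => ((mem_mset w1 w2).1 hj).2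
  simp only [C1, insert_eq, disjoint_union_left]
  exact ⟨⟨hM.mono_left (singleton_subset_iff.2 hi), disjoint_iff_inter_eq_empty.2 hdisj,
    hM.mono_left (filter_subset _ _)⟩, hM.mono_left (hE.trans (e1_subset_mset w1 w2 i))⟩

end

/-- In a 2-dim C-WMMG with `A_1(N) ∩ A_2(N) = ∅`, `p_i ∈ M`, `E ⊆ E_{1i}`, if
`C = C_{1i} ∪ E` is winning with `p_i ∈ A_2(C)`, then every player of
`A_1(N) ∪ D_{1i}` is swing in `C` and every player of `E` is null in `C`. -/
theorem swing_and_null_in_wc1 {P : Type*} [Fintype P] [DecidableEq P]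
    (w1 w2 : P → ℕ)
    (hdisj : Aset w1 Finset.univ ∩ Aset w2 Finset.univ = ∅)
    (i : P) (hi : i ∈ Mset w1 w2)
    (E : Finset P) (hE : E ⊆ E1 w1 w2 i)
    (hwin : Winning w1 w2 (C1 w1 w2 i ∪ E))
    (hbusy : i ∈ Aset w2 (C1 w1 w2 i ∪ E)) :
    (∀ j ∈ Aset w1 Finset.univ ∪ D1 w1 w2 i, Swing w1 w2 j (C1 w1 w2 i ∪ E)) ∧
    (∀ j ∈ E, NullIn w1 w2 j (C1 w1 w2 i ∪ E)) := by
  set C := C1 w1 w2 i ∪ E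
  have hN : (univ : Finset P).Nonempty := ⟨i, mem_univ i⟩
  have hA1C : Aset w1 univ ⊆ C := (aset_subset_c1 w1 w2 i).trans subset_union_left
  have hsup1 : C.sup w1 = univ.sup w1 := sup_eq_of_aset_subset (subset_univ C) hN hA1C
  have hsup2 : C.sup w2 = w2 i := (mem_aset.1 hbusy).2.symm
  have hqC : q w1 w2 C = univ.sup w1 + w2 i := by rw [q, hsup1, hsup2]
  have hcompl2 : Cᶜ.sup w2 = univ.sup w2 := sup_eq_of_aset_subset (subset_univ _) hN
    (subset_compl_iff_disjoint_left.2 (disjoint_c1_union_aset w1 w2 hdisj hi hE))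
  constructor
  · intro j hj
    refine swing_of_le w1 w2 (mem_union_left _ (mem_insert_of_mem hj)) ?_
    rw [hqC, hcompl2]
    rcases mem_union.1 hj with hA | hD
    · linarith [(mem_aset.1 hA).2, le_sup (f := w2) (mem_univ i)]
    · linarith [(mem_filter.1 hD).2]
  · intro j hj
    have hjE1 := hE hj
    have hjA1 : j ∉ Aset w1 univ := ((mem_mset w1 w2).1 (e1_subset_mset w1 w2 i hjE1)).1
    have hiC : i ∈ C.erase j := mem_erase.2 ⟨(ne_of_mem_e1 w1 w2 hjE1).symm, (mem_aset.1 hbusy).1⟩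
    refine nullIn_of_lt w1 w2 hwin (mem_union_right _ hj) ?_ ?_ ?_ ?_
    · rw [sup_eq_of_aset_subset (subset_univ _) hN (subset_erase.2 ⟨hA1C, hjA1⟩), hsup1]
    · exact sup_eq_of_mem_aset (erase_subset j C) hiC hbusy
    · exact hcompl2 ▸ le_sup (mem_univ j)
    · rw [hqC, hcompl2]
      linarith [add_sup_lt_of_mem_e1 w1 w2 hjE1]
end

section
/- In a 2-dimensional C-WMMG with A_1(N) ∩ A_2(N) = ∅, let p_i ∈ M and suppose WC1_i ≠ ∅. Then for every p_j ∈ A_1(N) ∪ D_{1i}, the number of coalitions C ∈ WC1_i in which p_j is swing equals 2^{|E_{1i}|}; and for every p_j ∈ E_{1i}, the number of coalitions C ∈ WC1_i with p_j ∈ C in which p_j is swing equals 0. -/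
open Finset in
lemma mem_wc1_char {P : Type*} [Fintype P] [DecidableEq P] (w1 w2 : P → ℕ)
    (i : P) (h2i : w2 i < Finset.univ.sup w2) (C : Finset P) :
    C ∈ WC1 w1 w2 i ↔
      (i ∈ C ∧ (∀ t, w2 i + Finset.univ.sup w1 ≤ w1 t + Finset.univ.sup w2 → t ∈ C) ∧
        ∀ t ∈ C, w2 t ≤ w2 i) := by
  have hP : Nonempty P := ⟨i⟩
  obtain ⟨j₀, -, hj₀⟩ := Finset.exists_mem_eq_sup (univ : Finset P) univ_nonempty w1
  obtain ⟨t2, -, ht2⟩ := Finset.exists_mem_eq_sup (univ : Finset P) univ_nonempty w2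
  constructor
  · rintro ⟨hw, hA, hi2⟩
    rw [Aset, mem_filter] at hi2
    have hL : ∀ t ∈ C, w2 t ≤ w2 i := fun t ht => (Finset.le_sup ht).trans hi2.2.ge
    have hj₀A : j₀ ∈ Aset w1 C := by
      rw [hA, Aset, mem_filter]; exact ⟨mem_univ _, hj₀.symm⟩
    rw [Aset, mem_filter] at hj₀A
    have hsup1 : C.sup w1 = univ.sup w1 := by rw [← hj₀A.2, hj₀]
    have ht2C : t2 ∉ C := fun h => absurd (hL t2 h) (by omega)
    have hsupc2 : Cᶜ.sup w2 = univ.sup w2 :=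
      le_antisymm (Finset.sup_le fun t _ => Finset.le_sup (mem_univ t))
        (ht2.le.trans (Finset.le_sup (mem_compl.2 ht2C)))
    have hw' : Cᶜ.sup w1 + univ.sup w2 < univ.sup w1 + w2 i := by
      have := hw
      rw [Winning, q, q, hsupc2, hsup1, ← hi2.2] at this
      omega
    refine ⟨hi2.1, fun t ht => ?_, hL⟩
    by_contra htC
    have : w1 t ≤ Cᶜ.sup w1 := Finset.le_sup (mem_compl.2 htC)
    omega
  · rintro ⟨hiC, hG, hL⟩
    have hsupC2 : C.sup w2 = w2 i := le_antisymm (Finset.sup_le hL) (Finset.le_sup hiC)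
    have hj₀C : j₀ ∈ C := hG j₀ (by omega)
    have hsupC1 : C.sup w1 = univ.sup w1 :=
      le_antisymm (Finset.sup_le fun t _ => Finset.le_sup (mem_univ t))
        (hj₀.le.trans (Finset.le_sup hj₀C))
    have ht2C : t2 ∉ C := fun h => absurd (hL t2 h) (by omega)
    obtain ⟨u, hu, hsu⟩ := Finset.exists_mem_eq_sup Cᶜ ⟨t2, mem_compl.2 ht2C⟩ w1
    have huG : ¬ (w2 i + univ.sup w1 ≤ w1 u + univ.sup w2) := fun h =>
      (mem_compl.1 hu) (hG u h)
    have hsupc2 : Cᶜ.sup w2 ≤ univ.sup w2 := Finset.sup_le fun t _ => Finset.le_sup (mem_univ t)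
    refine ⟨?_, ?_, ?_⟩
    · rw [Winning, q, q, hsupC1, hsupC2, hsu]; omega
    · ext j
      simp only [Aset, mem_filter, mem_univ, true_and, hsupC1]
      exact ⟨fun h => h.2, fun h => ⟨hG j (by omega), h⟩⟩
    · rw [Aset, mem_filter]; exact ⟨hiC, hsupC2.symm⟩


/-- In a 2-dim C-WMMG with `A_1(N) ∩ A_2(N) = ∅`, `p_i ∈ M` and `WC1_i ≠ ∅`:
for every `p_j ∈ A_1(N) ∪ D_{1i}` the number of coalitions of `WC1_i` in which `p_j`
is swing equals `2^{|E_{1i}|}`, and for every `p_j ∈ E_{1i}` the number of coalitions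
of `WC1_i` containing `p_j` in which `p_j` is swing equals `0`. -/
theorem count_swing_in_wc1 {P : Type*} [Fintype P] [DecidableEq P]
    (w1 w2 : P → ℕ)
    (hdisj : Aset w1 Finset.univ ∩ Aset w2 Finset.univ = ∅)
    (i : P) (hi : i ∈ Mset w1 w2)
    (hne : (WC1 w1 w2 i).Nonempty) :
    (∀ j ∈ Aset w1 Finset.univ ∪ D1 w1 w2 i,
      {C ∈ WC1 w1 w2 i | Swing w1 w2 j C}.ncard = 2 ^ (E1 w1 w2 i).card) ∧
    (∀ j ∈ E1 w1 w2 i,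
      {C ∈ WC1 w1 w2 i | j ∈ C ∧ Swing w1 w2 j C}.ncard = 0) := by
  classical
  have hP : Nonempty P := ⟨i⟩
  obtain ⟨t2, -, ht2⟩ := Finset.exists_mem_eq_sup (Finset.univ : Finset P) Finset.univ_nonempty w2
  have hiM : w1 i ≠ Finset.univ.sup w1 ∧ w2 i ≠ Finset.univ.sup w2 := by
    simpa [Mset, Bset, Aset] using hi
  have h2i : w2 i < Finset.univ.sup w2 :=
    lt_of_le_of_ne (Finset.le_sup (Finset.mem_univ i)) hiM.2
  have h1i : w1 i < Finset.univ.sup w1 :=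
    lt_of_le_of_ne (Finset.le_sup (Finset.mem_univ i)) hiM.1
  obtain ⟨C0, hC0⟩ := hne
  rw [mem_wc1_char w1 w2 i h2i] at hC0
  have hGL : ∀ t, w2 i + Finset.univ.sup w1 ≤ w1 t + Finset.univ.sup w2 → w2 t ≤ w2 i :=
    fun t h => hC0.2.2 t (hC0.2.1 t h)
  set K : Finset P :=
    insert i (Finset.univ.filter fun t => w2 i + Finset.univ.sup w1 ≤ w1 t + Finset.univ.sup w2)
    with hK
  set L : Finset P := Finset.univ.filter fun t => w2 t ≤ w2 i with hLdef
  have hKL : K ⊆ L := by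
    rw [hK, Finset.insert_subset_iff]
    refine ⟨by simp [hLdef], fun t ht => ?_⟩
    exact Finset.mem_filter.2 ⟨Finset.mem_univ _, hGL t (Finset.mem_filter.1 ht).2⟩
  have hWC1 : ∀ C, C ∈ WC1 w1 w2 i ↔ C ∈ Finset.Icc K L := by
    intro C
    rw [Finset.mem_Icc, mem_wc1_char w1 w2 i h2i]
    constructor
    · rintro ⟨h1, h2, h3⟩
      exact ⟨Finset.insert_subset h1 fun t ht => h2 t (Finset.mem_filter.1 ht).2,
        fun t ht => Finset.mem_filter.2 ⟨Finset.mem_univ _, h3 t ht⟩⟩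
    · rintro ⟨h1, h2⟩
      exact ⟨h1 (Finset.mem_insert_self _ _),
        fun t ht => h1 (Finset.mem_insert_of_mem (Finset.mem_filter.2 ⟨Finset.mem_univ _, ht⟩)),
        fun t ht => (Finset.mem_filter.1 (h2 ht)).2⟩
  have hE1 : E1 w1 w2 i = L \ K := by
    ext j
    simp only [E1, C1, D1, Mset, Bset, Aset, hK, hLdef, Finset.mem_filter, Finset.mem_sdiff,
      Finset.mem_univ, true_and, Finset.mem_insert, Finset.mem_union, not_or]
    constructor
    · rintro ⟨⟨⟨hM1, hM2⟩, hji, -, hnd⟩, hw⟩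
      exact ⟨hw, hji, fun hc => hnd ⟨⟨hM1, hM2⟩, hc⟩⟩
    · rintro ⟨hw, hji, hnd⟩
      have hw1 : w1 j ≤ Finset.univ.sup w1 := Finset.le_sup (Finset.mem_univ j)
      have hn2 : ¬ w2 j = Finset.univ.sup w2 := by omega
      have hn1 : ¬ w1 j = Finset.univ.sup w1 := by omega
      exact ⟨⟨⟨hn1, hn2⟩, hji, hn1, fun h => hnd h.2⟩, hw⟩
  have hcard : (Finset.Icc K L).card = 2 ^ (E1 w1 w2 i).card := by
    rw [Finset.card_Icc_finset hKL, hE1, Finset.card_sdiff_of_subset hKL]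
  constructor
  · intro j hj
    have hjG : w2 i + Finset.univ.sup w1 ≤ w1 j + Finset.univ.sup w2 := by
      rcases Finset.mem_union.1 hj with h | h
      · simp only [Aset, Finset.mem_filter, Finset.mem_univ, true_and] at h
        omega
      · exact (Finset.mem_filter.1 h).2
    have hswing : ∀ C ∈ WC1 w1 w2 i, Swing w1 w2 j C := by
      intro C hC
      rw [mem_wc1_char w1 w2 i h2i] at hC
      obtain ⟨hiC, hG, hL⟩ := hC
      have hjC : j ∈ C := hG j hjG
      refine ⟨hjC, ?_⟩
      rw [Winning, q, q, not_lt]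
      have e1 : (C.erase j).sup w1 ≤ Finset.univ.sup w1 :=
        Finset.sup_le fun t _ => Finset.le_sup (Finset.mem_univ t)
      have e2 : (C.erase j).sup w2 ≤ w2 i :=
        Finset.sup_le fun t ht => hL t (Finset.mem_of_mem_erase ht)
      have c1 : w1 j ≤ (C.erase j)ᶜ.sup w1 :=
        Finset.le_sup (Finset.mem_compl.2 (Finset.notMem_erase j C))
      have ht2C : t2 ∉ C.erase j := fun h =>
        absurd (hL t2 (Finset.mem_of_mem_erase h)) (by omega)
      have c2 : w2 t2 ≤ (C.erase j)ᶜ.sup w2 := Finset.le_sup (Finset.mem_compl.2 ht2C)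
      omega
    have hset : {C ∈ WC1 w1 w2 i | Swing w1 w2 j C} = ↑(Finset.Icc K L) := by
      ext C
      simp only [Set.mem_setOf_eq, Finset.mem_coe, ← hWC1 C]
      exact ⟨fun h => h.1, fun h => ⟨h, hswing C h⟩⟩
    rw [hset, Set.ncard_coe_finset, hcard]
  · intro j hj
    have hset : {C ∈ WC1 w1 w2 i | j ∈ C ∧ Swing w1 w2 j C} = ∅ := by
      rw [Set.eq_empty_iff_forall_notMem]
      rintro C ⟨hC, hjC, hsw⟩
      apply hsw.2
      have hjK : j ∉ K := (Finset.mem_sdiff.1 (hE1 ▸ hj)).2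
      have hji : j ≠ i := fun h => hjK (h ▸ Finset.mem_insert_self i _)
      have hmem : C.erase j ∈ WC1 w1 w2 i := by
        rw [mem_wc1_char w1 w2 i h2i] at hC ⊢
        obtain ⟨hiC, hG, hL⟩ := hC
        refine ⟨Finset.mem_erase.2 ⟨hji.symm, hiC⟩, fun t ht => ?_, fun t ht => hL t (Finset.mem_of_mem_erase ht)⟩
        refine Finset.mem_erase.2 ⟨fun h => hjK ?_, hG t ht⟩
        exact Finset.mem_insert_of_mem (Finset.mem_filter.2 ⟨Finset.mem_univ _, h ▸ ht⟩)
      exact hmem.1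
    rw [hset, Set.ncard_empty]
end

section
/- In a 2-dimensional C-WMMG, let p_i and p_j be distinct players with p_i^1 ≤ p_j^1 and p_i^2 ≤ p_j^2. Then (a) there is at most one minimal winning coalition C with p_i ∈ C and p_j ∉ C; and (b) if C is a minimal winning coalition with p_i ∈ C and p_j ∉ C, then there exists a minimal winning coalition C* with p_j ∈ C*, p_i ∉ C*, C* ⊆ (C ∖ {p_i}) ∪ {p_j}, and hence |C*| ≤ |C|. -/
set_option linter.unusedSectionVars false

section Aux

variable {P : Type*} [Fintype P] [DecidableEq P]

lemma q_comm (w1 w2 : P → ℕ) (C : Finset P) : q w1 w2 C = q w2 w1 C :=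
  add_comm _ _

lemma q_mono (w1 w2 : P → ℕ) {C D : Finset P} (h : C ⊆ D) :
    q w1 w2 C ≤ q w1 w2 D :=
  add_le_add (Finset.sup_mono h) (Finset.sup_mono h)

lemma winning_swap {w1 w2 : P → ℕ} {C : Finset P} (h : Winning w1 w2 C) :
    Winning w2 w1 C := by
  unfold Winning at *
  rw [q_comm w2 w1, q_comm w2 w1]
  exact h

lemma mwc_swap {w1 w2 : P → ℕ} {C : Finset P} (h : MWC w1 w2 C) :
    MWC w2 w1 C :=
  ⟨winning_swap h.1, fun D hD hw => h.2 D hD (winning_swap hw)⟩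

lemma exists_mwc_subset (w1 w2 : P → ℕ) :
    ∀ D : Finset P, Winning w1 w2 D → ∃ E ⊆ D, MWC w1 w2 E := by
  intro D
  induction D using Finset.strongInduction with
  | _ D ih =>
    intro hD
    by_cases h : ∀ E ⊂ D, ¬ Winning w1 w2 E
    · exact ⟨D, Finset.Subset.refl D, hD, h⟩
    · push_neg at h
      obtain ⟨E, hE, hEw⟩ := h
      obtain ⟨F, hF, hFm⟩ := ih E hE hEw
      exact ⟨F, hF.trans hE.subset, hFm⟩

lemma compl_erase_subset (C : Finset P) (i : P) :
    (C.erase i)ᶜ ⊆ insert i Cᶜ := by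
  intro x hx
  rw [Finset.mem_compl, Finset.mem_erase] at hx
  push_neg at hx
  rw [Finset.mem_insert, Finset.mem_compl]
  by_cases hxi : x = i
  · exact Or.inl hxi
  · exact Or.inr (hx hxi)

/-- `i` is the strict `w1`-top of `C`, and every other member of `C` has `w2`-weight
strictly above all of `Cᶜ`. -/
def TypeA (w1 w2 : P → ℕ) (i : P) (C : Finset P) : Prop :=
  (∀ m ∈ C, m ≠ i → w1 m < w1 i) ∧ (∀ m ∈ C, m ≠ i → Cᶜ.sup w2 < w2 m)

/-- `C ≠ {i}` for any MWC containing `i` but avoiding a dominating `j`. -/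
lemma mwc_ne_singleton {w1 w2 : P → ℕ} {i j : P} {C : Finset P}
    (hC : MWC w1 w2 C) (hj : j ∉ C) (h1 : w1 i ≤ w1 j) (h2 : w2 i ≤ w2 j) :
    C ≠ {i} := by
  intro hEq
  subst hEq
  have hjc : j ∈ ({i} : Finset P)ᶜ := Finset.mem_compl.mpr hj
  have hb1 : w1 j ≤ ({i} : Finset P)ᶜ.sup w1 := Finset.le_sup hjc
  have hb2 : w2 j ≤ ({i} : Finset P)ᶜ.sup w2 := Finset.le_sup hjc
  have hwin := hC.1
  unfold Winning q at hwin
  rw [Finset.sup_singleton, Finset.sup_singleton] at hwin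
  omega

lemma exists_other {i : P} {C : Finset P} (hi : i ∈ C) (hne : C ≠ {i}) :
    ∃ m ∈ C, m ≠ i := by
  by_contra h
  push_neg at h
  exact hne (Finset.eq_singleton_iff_unique_mem.mpr ⟨hi, h⟩)

lemma typeA_of_lt {w1 w2 : P → ℕ} {i j : P} {C : Finset P}
    (hC : MWC w1 w2 C) (hi : i ∈ C) (hj : j ∉ C)
    (h1 : w1 i ≤ w1 j) (h2 : w2 i ≤ w2 j)
    (hlt : (C.erase i).sup w1 < C.sup w1) : TypeA w1 w2 i C := by
  have hjc : j ∈ Cᶜ := Finset.mem_compl.mpr hj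
  have hb1j : w1 j ≤ Cᶜ.sup w1 := Finset.le_sup hjc
  have hb2j : w2 j ≤ Cᶜ.sup w2 := Finset.le_sup hjc
  have hwin := hC.1
  unfold Winning q at hwin
  -- i is the strict w1-top of C
  have hCi : insert i (C.erase i) = C := Finset.insert_erase hi
  have hsup1 : C.sup w1 = w1 i ⊔ (C.erase i).sup w1 := by
    conv_lhs => rw [← hCi]
    exact Finset.sup_insert
  have hei : (C.erase i).sup w1 < w1 i := by
    rcases le_total (w1 i) ((C.erase i).sup w1) with h | h
    · rw [hsup1, sup_eq_right.mpr h] at hlt; omega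
    · rcases lt_or_eq_of_le h with h' | h'
      · exact h'
      · rw [hsup1, h', sup_idem] at hlt; omega
  have ha1 : C.sup w1 = w1 i := by
    rw [hsup1, sup_eq_left.mpr hei.le]
  have hstrict : ∀ m ∈ C, m ≠ i → w1 m < w1 i := fun m hm hne =>
    lt_of_le_of_lt (Finset.le_sup (Finset.mem_erase.mpr ⟨hne, hm⟩)) hei
  have ha1b : C.sup w1 ≤ Cᶜ.sup w1 := by rw [ha1]; exact h1.trans hb1j
  have ha2 : Cᶜ.sup w2 < C.sup w2 := by omega
  refine ⟨hstrict, ?_⟩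
  intro m hm hmne
  by_contra hm2
  push_neg at hm2
  -- removing m must lose
  have hem : ¬ Winning w1 w2 (C.erase m) := hC.2 _ (Finset.erase_ssubset hm)
  rw [Winning, not_lt] at hem
  have hcomp : q w1 w2 (C.erase m)ᶜ ≤ q w1 w2 Cᶜ := by
    calc q w1 w2 (C.erase m)ᶜ ≤ q w1 w2 (insert m Cᶜ) :=
          q_mono w1 w2 (compl_erase_subset C m)
      _ = q w1 w2 Cᶜ := by
          have hw1m : w1 m ≤ Cᶜ.sup w1 := (hstrict m hm hmne).le.trans (h1.trans hb1j)
          unfold q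
          rw [Finset.sup_insert, Finset.sup_insert, sup_eq_right.mpr hw1m,
            sup_eq_right.mpr hm2]
  -- but removing m does not decrease q
  obtain ⟨k, hkC, hk⟩ := Finset.exists_mem_eq_sup C ⟨i, hi⟩ w2
  have hkm : k ≠ m := by
    intro h; rw [h] at hk; rw [hk] at ha2; omega
  have hq1 : C.sup w1 ≤ (C.erase m).sup w1 := by
    rw [ha1]; exact Finset.le_sup (Finset.mem_erase.mpr ⟨Ne.symm hmne, hi⟩)
  have hq2 : C.sup w2 ≤ (C.erase m).sup w2 := by
    rw [hk]; exact Finset.le_sup (Finset.mem_erase.mpr ⟨hkm, hkC⟩)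
  have hle : q w1 w2 C ≤ q w1 w2 (C.erase m) := add_le_add hq1 hq2
  unfold q at hle hem hcomp
  omega


lemma typeA_or {w1 w2 : P → ℕ} {i j : P} {C : Finset P}
    (hC : MWC w1 w2 C) (hi : i ∈ C) (hj : j ∉ C)
    (h1 : w1 i ≤ w1 j) (h2 : w2 i ≤ w2 j) :
    TypeA w1 w2 i C ∨ TypeA w2 w1 i C := by
  have hjc : j ∈ Cᶜ := Finset.mem_compl.mpr hj
  have hb1j : w1 j ≤ Cᶜ.sup w1 := Finset.le_sup hjc
  have hb2j : w2 j ≤ Cᶜ.sup w2 := Finset.le_sup hjc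
  have hei : ¬ Winning w1 w2 (C.erase i) := hC.2 _ (Finset.erase_ssubset hi)
  rw [Winning, not_lt] at hei
  have hcomp : q w1 w2 (C.erase i)ᶜ ≤ q w1 w2 Cᶜ := by
    calc q w1 w2 (C.erase i)ᶜ ≤ q w1 w2 (insert i Cᶜ) :=
          q_mono w1 w2 (compl_erase_subset C i)
      _ = q w1 w2 Cᶜ := by
          unfold q
          rw [Finset.sup_insert, Finset.sup_insert,
            sup_eq_right.mpr (h1.trans hb1j), sup_eq_right.mpr (h2.trans hb2j)]
  have hwin := hC.1
  unfold Winning at hwin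
  have h6 : q w1 w2 (C.erase i) < q w1 w2 C := lt_of_le_of_lt (hei.trans hcomp) hwin
  have hs1 : (C.erase i).sup w1 ≤ C.sup w1 := Finset.sup_mono (Finset.erase_subset i C)
  have hs2 : (C.erase i).sup w2 ≤ C.sup w2 := Finset.sup_mono (Finset.erase_subset i C)
  unfold q at h6
  by_cases hlt : (C.erase i).sup w1 < C.sup w1
  · exact Or.inl (typeA_of_lt hC hi hj h1 h2 hlt)
  · have hlt2 : (C.erase i).sup w2 < C.sup w2 := by omega
    exact Or.inr (typeA_of_lt (mwc_swap hC) hi hj h2 h1 hlt2)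

lemma subsetAA {w1 w2 : P → ℕ} {i : P} {C C' : Finset P}
    (hA' : TypeA w1 w2 i C') (hi : i ∈ C) (hle : Cᶜ.sup w2 ≤ C'ᶜ.sup w2) :
    C' ⊆ C := by
  intro x hx
  by_cases hxi : x = i
  · exact hxi ▸ hi
  · by_contra hxC
    have hx2 : w2 x ≤ Cᶜ.sup w2 := Finset.le_sup (Finset.mem_compl.mpr hxC)
    have := hA'.2 x hx hxi
    omega

lemma uniqAA {w1 w2 : P → ℕ} {i : P} {C C' : Finset P}
    (hC : MWC w1 w2 C) (hC' : MWC w1 w2 C')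
    (hA : TypeA w1 w2 i C) (hA' : TypeA w1 w2 i C')
    (hi : i ∈ C) (hi' : i ∈ C') : C = C' := by
  rcases le_total (Cᶜ.sup w2) (C'ᶜ.sup w2) with h | h
  · have hsub : C' ⊆ C := subsetAA hA' hi h
    rcases eq_or_ne C' C with h' | h'
    · exact h'.symm
    · exact absurd hC'.1 (hC.2 C' (Finset.ssubset_iff_subset_ne.mpr ⟨hsub, h'⟩))
  · have hsub : C ⊆ C' := subsetAA hA hi' h
    rcases eq_or_ne C C' with h' | h'
    · exact h'
    · exact absurd hC.1 (hC'.2 C (Finset.ssubset_iff_subset_ne.mpr ⟨hsub, h'⟩))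

lemma notAB {w1 w2 : P → ℕ} {i j : P} {C C' : Finset P}
    (hC : MWC w1 w2 C) (hC' : MWC w2 w1 C')
    (hA : TypeA w1 w2 i C) (hA' : TypeA w2 w1 i C')
    (hi : i ∈ C) (hj : j ∉ C) (hi' : i ∈ C') (hj' : j ∉ C')
    (h1 : w1 i ≤ w1 j) (h2 : w2 i ≤ w2 j) : False := by
  have hb1j : w1 j ≤ Cᶜ.sup w1 := Finset.le_sup (Finset.mem_compl.mpr hj)
  have hb2j : w2 j ≤ Cᶜ.sup w2 := Finset.le_sup (Finset.mem_compl.mpr hj)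
  have hb1'j : w1 j ≤ C'ᶜ.sup w1 := Finset.le_sup (Finset.mem_compl.mpr hj')
  have hb2'j : w2 j ≤ C'ᶜ.sup w2 := Finset.le_sup (Finset.mem_compl.mpr hj')
  have ha1 : C.sup w1 = w1 i := by
    refine le_antisymm (Finset.sup_le fun m hm => ?_) (Finset.le_sup hi)
    by_cases h : m = i
    · exact h ▸ le_rfl
    · exact (hA.1 m hm h).le
  have ha2' : C'.sup w2 = w2 i := by
    refine le_antisymm (Finset.sup_le fun m hm => ?_) (Finset.le_sup hi')
    by_cases h : m = i
    · exact h ▸ le_rfl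
    · exact (hA'.1 m hm h).le
  -- a second member of C with large w2
  obtain ⟨m0, hm0, hm0i⟩ := exists_other hi (mwc_ne_singleton hC hj h1 h2)
  have hm0b : Cᶜ.sup w2 < w2 m0 := hA.2 m0 hm0 hm0i
  obtain ⟨k, hkC, hk⟩ := Finset.exists_mem_eq_sup C ⟨i, hi⟩ w2
  have hm0k : w2 m0 ≤ w2 k := hk ▸ Finset.le_sup hm0
  have hki : w2 i < w2 k := by omega
  have hkC' : k ∉ C' := by
    intro h
    have := hA'.1 k h (by intro e; rw [e] at hki; omega)
    omega
  have hb2'k : w2 k ≤ C'ᶜ.sup w2 := Finset.le_sup (Finset.mem_compl.mpr hkC')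
  -- a second member of C' with large w1
  obtain ⟨m0', hm0', hm0'i⟩ :=
    exists_other hi' (mwc_ne_singleton hC' hj' h2 h1)
  have hm0'b : C'ᶜ.sup w1 < w1 m0' := hA'.2 m0' hm0' hm0'i
  obtain ⟨k', hk'C', hk'⟩ := Finset.exists_mem_eq_sup C' ⟨i, hi'⟩ w1
  have hm0'k : w1 m0' ≤ w1 k' := hk' ▸ Finset.le_sup hm0'
  have hk'i : w1 i < w1 k' := by omega
  have hk'C : k' ∉ C := by
    intro h
    have := hA.1 k' h (by intro e; rw [e] at hk'i; omega)
    omega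
  have hb1k' : w1 k' ≤ Cᶜ.sup w1 := Finset.le_sup (Finset.mem_compl.mpr hk'C)
  have hwC := hC.1
  have hwC' := hC'.1
  unfold Winning q at hwC hwC'
  rw [ha1, hk] at hwC
  rw [ha2', hk'] at hwC'
  omega

end Aux

/-- In a 2-dim C-WMMG, for distinct players `p_i, p_j` with `p_i^1 ≤ p_j^1` and
`p_i^2 ≤ p_j^2`: (a) there is at most one minimal winning coalition containing `p_i`
but not `p_j`; (b) for any such minimal winning coalition `C`, there is a minimal
winning coalition `C*` with `p_j ∈ C*`, `p_i ∉ C*`, `C* ⊆ (C ∖ {p_i}) ∪ {p_j}` and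
hence `|C*| ≤ |C|`. -/


theorem mwc_exchange {P : Type*} [Fintype P] [DecidableEq P] (w1 w2 : P → ℕ)
    (i j : P) (hij : i ≠ j) (h1 : w1 i ≤ w1 j) (h2 : w2 i ≤ w2 j) :
    (∀ C C' : Finset P,
      MWC w1 w2 C → i ∈ C → j ∉ C →
      MWC w1 w2 C' → i ∈ C' → j ∉ C' → C = C') ∧
    (∀ C : Finset P, MWC w1 w2 C → i ∈ C → j ∉ C →
      ∃ Cs : Finset P, MWC w1 w2 Cs ∧ j ∈ Cs ∧ i ∉ Cs ∧
        Cs ⊆ insert j (C.erase i) ∧ Cs.card ≤ C.card) := by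
  constructor
  · -- (a) uniqueness
    intro C C' hC hiC hjC hC' hiC' hjC'
    rcases typeA_or hC hiC hjC h1 h2 with hA | hB <;>
      rcases typeA_or hC' hiC' hjC' h1 h2 with hA' | hB'
    · exact uniqAA hC hC' hA hA' hiC hiC'
    · exact absurd (notAB hC (mwc_swap hC') hA hB' hiC hjC hiC' hjC' h1 h2) not_false
    · exact absurd (notAB hC' (mwc_swap hC) hA' hB hiC' hjC' hiC hjC h1 h2) not_false
    · exact uniqAA (mwc_swap hC) (mwc_swap hC') hB hB' hiC hiC'
  · -- (b) exchange
    intro C hC hiC hjC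
    set D := insert j (C.erase i) with hD
    have hiD : i ∉ D := by
      rw [hD, Finset.mem_insert]
      push_neg
      exact ⟨hij, Finset.notMem_erase i C⟩
    have key : ∀ w : P → ℕ, w i ≤ w j → C.sup w ≤ D.sup w := by
      intro w hw
      refine Finset.sup_le fun x hx => ?_
      by_cases hxi : x = i
      · subst hxi
        exact hw.trans (Finset.le_sup (Finset.mem_insert_self j _))
      · exact Finset.le_sup (Finset.mem_insert.mpr
          (Or.inr (Finset.mem_erase.mpr ⟨hxi, hx⟩)))
    have key2 : ∀ w : P → ℕ, w i ≤ w j → Dᶜ.sup w ≤ Cᶜ.sup w := by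
      intro w hw
      refine Finset.sup_le fun x hx => ?_
      rw [Finset.mem_compl] at hx
      by_cases hxi : x = i
      · subst hxi
        exact hw.trans (Finset.le_sup (Finset.mem_compl.mpr hjC))
      · have hxC : x ∉ C := fun h => hx (Finset.mem_insert.mpr
          (Or.inr (Finset.mem_erase.mpr ⟨hxi, h⟩)))
        exact Finset.le_sup (Finset.mem_compl.mpr hxC)
    have hqCD : q w1 w2 C ≤ q w1 w2 D := add_le_add (key w1 h1) (key w2 h2)
    have hqDC : q w1 w2 Dᶜ ≤ q w1 w2 Cᶜ := add_le_add (key2 w1 h1) (key2 w2 h2)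
    have hWD : Winning w1 w2 D := lt_of_le_of_lt hqDC (lt_of_lt_of_le hC.1 hqCD)
    obtain ⟨Cs, hCsD, hCs⟩ := exists_mwc_subset w1 w2 D hWD
    have hiCs : i ∉ Cs := fun h => hiD (hCsD h)
    have hjCs : j ∈ Cs := by
      by_contra hjCs
      have hsub : Cs ⊆ C := by
        intro x hx
        have := hCsD hx
        rw [hD, Finset.mem_insert] at this
        rcases this with h | h
        · exact absurd (h ▸ hx) hjCs
        · exact Finset.mem_of_mem_erase h
      have hss : Cs ⊂ C := Finset.ssubset_iff_subset_ne.mpr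
        ⟨hsub, fun e => hiCs (e ▸ hiC)⟩
      exact hC.2 Cs hss hCs.1
    have hcard : Cs.card ≤ C.card := by
      have h1' : Cs.card ≤ D.card := Finset.card_le_card hCsD
      have h2' : D.card = (C.erase i).card + 1 :=
        Finset.card_insert_of_notMem (fun h => hjC (Finset.mem_of_mem_erase h))
      have h3' : (C.erase i).card = C.card - 1 := Finset.card_erase_of_mem hiC
      have h4' : 1 ≤ C.card := Finset.card_pos.mpr ⟨i, hiC⟩
      omega
    exact ⟨Cs, hCs, hjCs, hiCs, hCsD, hcard⟩
end

section
/- In a 2-dimensional C-WMMG, if C is a minimal winning coalition, then for every p_j ∈ C, either p_j is busy in C or p_j is busy in (N∖C) ∪ {p_j}; that is, p_j ∈ B(C) ∪ B((N∖C) ∪ {p_j}). -/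
/-- If `j` does not attain the max of `w` over `C`, erasing it keeps the sup. -/
lemma sup_erase_of_not_max {P : Type*} [DecidableEq P] (w : P → ℕ) (C : Finset P)
    (j : P) (hj : j ∈ C) (h : w j ≠ C.sup w) : (C.erase j).sup w = C.sup w := by
  apply le_antisymm (Finset.sup_mono (Finset.erase_subset _ _))
  obtain ⟨k, hk, hk2⟩ := Finset.exists_mem_eq_sup C ⟨j, hj⟩ w
  have hkj : k ≠ j := by rintro rfl; exact h hk2.symm
  rw [hk2]
  exact Finset.le_sup (Finset.mem_erase.mpr ⟨hkj, hk⟩)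

/-- In a 2-dim C-WMMG, if `C` is a minimal winning coalition, then every `p_j ∈ C`
is busy in `C` or busy in `(N ∖ C) ∪ {p_j}`. -/
theorem mwc_busy_here_or_there {P : Type*} [Fintype P] [DecidableEq P]
    (w1 w2 : P → ℕ) (C : Finset P) (hC : MWC w1 w2 C) :
    ∀ j ∈ C, j ∈ Bset w1 w2 C ∪ Bset w1 w2 (insert j Cᶜ) := by
  intro j hj
  by_contra hnot
  simp only [Finset.mem_union, Bset, Aset, Finset.mem_filter, not_or, not_and,
    Finset.mem_insert, Finset.mem_compl] at hnot
  obtain ⟨⟨h1, h2⟩, ⟨h1', h2'⟩⟩ := hnot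
  have h1 := h1 hj
  have h2 := h2 hj
  have h1' := h1' (Or.inl trivial)
  have h2' := h2' (Or.inl trivial)
  -- sup over insert j Cᶜ equals sup over Cᶜ
  have hs1 : (insert j Cᶜ).sup w1 = Cᶜ.sup w1 := by
    have := Finset.sup_insert (b := j) (s := Cᶜ) (f := w1)
    rw [this] at h1' ⊢
    omega
  have hs2 : (insert j Cᶜ).sup w2 = Cᶜ.sup w2 := by
    have := Finset.sup_insert (b := j) (s := Cᶜ) (f := w2)
    rw [this] at h2' ⊢
    omega
  -- D = C.erase j is winning
  have hD : Winning w1 w2 (C.erase j) := by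
    unfold Winning q
    rw [Finset.compl_erase, hs1, hs2,
      sup_erase_of_not_max w1 C j hj h1, sup_erase_of_not_max w2 C j hj h2]
    exact hC.1
  exact hC.2 (C.erase j) (Finset.erase_ssubset hj) hD
end

section
/- In a 2-dimensional C-WMMG, if C is a minimal winning coalition which has an idle player (i.e., C ∖ B(C) ≠ ∅), then exactly one of the two inequalities q_1(C) < q_1(N∖C) and q_2(C) < q_2(N∖C) holds. -/
theorem Finset.sup_erase_eq_of_lt {α β : Type*} [DecidableEq α] [LinearOrder β] [OrderBot β]
    {s : Finset α} {f : α → β} {j : α} (hj : f j < s.sup f) : (s.erase j).sup f = s.sup f := by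
  refine le_antisymm (Finset.sup_mono (Finset.erase_subset _ _)) ?_
  obtain ⟨a, has, ha⟩ := Finset.exists_mem_eq_sup s (Finset.nonempty_of_ne_empty
    (by rintro rfl; simp at hj)) f
  have haj : a ≠ j := by rintro rfl; exact hj.ne ha.symm
  exact ha ▸ Finset.le_sup (Finset.mem_erase.mpr ⟨haj, has⟩)

section Game

variable {P : Type*} [DecidableEq P] (w1 w2 : P → ℕ)

theorem mem_sdiff_Bset_iff {C : Finset P} {j : P} :
    j ∈ C \ Bset w1 w2 C ↔ j ∈ C ∧ w1 j < C.sup w1 ∧ w2 j < C.sup w2 := by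
  simp only [Bset, Aset, Finset.mem_sdiff, Finset.mem_union, Finset.mem_filter, not_or, not_and]
  constructor
  · rintro ⟨hjC, h1, h2⟩
    exact ⟨hjC, (Finset.le_sup hjC).lt_of_ne (h1 hjC), (Finset.le_sup hjC).lt_of_ne (h2 hjC)⟩
  · rintro ⟨hjC, h1, h2⟩
    exact ⟨hjC, fun _ => h1.ne, fun _ => h2.ne⟩

theorem not_winning_erase_iff [Fintype P] {C : Finset P} {j : P}
    (hj : j ∈ C \ Bset w1 w2 C) :
    ¬ Winning w1 w2 (C.erase j) ↔
      C.sup w1 + C.sup w2 ≤ max (w1 j) (Cᶜ.sup w1) + max (w2 j) (Cᶜ.sup w2) := by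
  obtain ⟨-, h1, h2⟩ := (mem_sdiff_Bset_iff w1 w2).mp hj
  rw [Winning, q, q, not_lt, Finset.compl_erase, Finset.sup_insert, Finset.sup_insert,
    Finset.sup_erase_eq_of_lt h1, Finset.sup_erase_eq_of_lt h2]

end Game

theorem xor_lt_of_lt_add_le_max_add_max {a₁ a₂ c₁ c₂ x₁ x₂ : ℕ} (hx₁ : x₁ < a₁) (hx₂ : x₂ < a₂)
    (hwin : c₁ + c₂ < a₁ + a₂) (hlose : a₁ + a₂ ≤ max x₁ c₁ + max x₂ c₂) :
    Xor (a₁ < c₁) (a₂ < c₂) :=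
  xor_iff_iff_not.mpr ⟨fun _ _ => by omega, fun _ => by omega⟩

/-- In a 2-dim C-WMMG, if a minimal winning coalition `C` has an idle player, then
exactly one of `q_1(C) < q_1(N∖C)` and `q_2(C) < q_2(N∖C)` holds. -/
theorem mwc_with_idle_player {P : Type*} [Fintype P] [DecidableEq P]
    (w1 w2 : P → ℕ) (C : Finset P) (hC : MWC w1 w2 C)
    (hidle : (C \ Bset w1 w2 C).Nonempty) :
    Xor' (C.sup w1 < Cᶜ.sup w1) (C.sup w2 < Cᶜ.sup w2) := by
  obtain ⟨hwin, hmin⟩ := hC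
  obtain ⟨j, hj⟩ := hidle
  obtain ⟨hjC, hj1, hj2⟩ := (mem_sdiff_Bset_iff w1 w2).mp hj
  have hlose := (not_winning_erase_iff w1 w2 hj).mp (hmin _ (Finset.erase_ssubset hjC))
  exact xor_lt_of_lt_add_le_max_add_max hj1 hj2 hwin hlose
end

section
/- In a 2-dimensional C-WMMG, if C is a minimal winning coalition with |A_1(C)| ≥ 2 and A_1(C) not a subset of A_2(C), then exactly one of the two inequalities q_1(C) ≤ q_1(N∖C) and q_2(C) ≤ q_2(N∖C) holds. -/
/-- In a 2-dim C-WMMG, if `C` is a minimal winning coalition with `|A_1(C)| ≥ 2` and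
`A_1(C) ⊄ A_2(C)`, then exactly one of `q_1(C) ≤ q_1(N∖C)` and `q_2(C) ≤ q_2(N∖C)` holds. -/
theorem mwc_with_two_busy {P : Type*} [Fintype P] [DecidableEq P]
    (w1 w2 : P → ℕ) (C : Finset P) (hC : MWC w1 w2 C)
    (hcard : 2 ≤ (Aset w1 C).card) (hns : ¬ Aset w1 C ⊆ Aset w2 C) :
    Xor' (C.sup w1 ≤ Cᶜ.sup w1) (C.sup w2 ≤ Cᶜ.sup w2) := by
  obtain ⟨hwin, hmin⟩ := hC
  -- not both
  have hnb : ¬ ((C.sup w1 ≤ Cᶜ.sup w1) ∧ (C.sup w2 ≤ Cᶜ.sup w2)) := by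
    rintro ⟨h1, h2⟩
    have := add_le_add h1 h2
    unfold Winning q at hwin
    omega
  -- at least one
  have hal : (C.sup w1 ≤ Cᶜ.sup w1) ∨ (C.sup w2 ≤ Cᶜ.sup w2) := by
    by_contra hno
    push_neg at hno
    obtain ⟨h1, h2⟩ := hno
    obtain ⟨j, hj, hj2⟩ := Finset.not_subset.mp hns
    rw [Aset, Finset.mem_filter] at hj
    obtain ⟨hjC, hjw1⟩ := hj
    have hjw2 : w2 j < C.sup w2 := by
      refine lt_of_le_of_ne (Finset.le_sup hjC) ?_
      intro h
      exact hj2 (Finset.mem_filter.mpr ⟨hjC, h⟩)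
    obtain ⟨k, hk, hkj⟩ := Finset.exists_mem_ne (s := Aset w1 C) hcard j
    rw [Aset, Finset.mem_filter] at hk
    obtain ⟨hkC, hkw1⟩ := hk
    obtain ⟨m, hmC, hmw2⟩ := Finset.exists_mem_eq_sup C ⟨j, hjC⟩ w2
    have hmj : m ≠ j := by
      intro h; rw [h] at hmw2; omega
    set D := C.erase j with hDdef
    have hDss : D ⊂ C := Finset.erase_ssubset hjC
    have hD1 : D.sup w1 = C.sup w1 := by
      refine le_antisymm (Finset.sup_mono (Finset.erase_subset _ _)) ?_
      rw [← hkw1]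
      exact Finset.le_sup (Finset.mem_erase.mpr ⟨hkj, hkC⟩)
    have hD2 : D.sup w2 = C.sup w2 := by
      refine le_antisymm (Finset.sup_mono (Finset.erase_subset _ _)) ?_
      rw [hmw2]
      exact Finset.le_sup (Finset.mem_erase.mpr ⟨hmj, hmC⟩)
    have hcompl : Dᶜ = insert j Cᶜ := by
      rw [hDdef, Finset.compl_erase]
    have hDc1 : Dᶜ.sup w1 = C.sup w1 := by
      rw [hcompl, Finset.sup_insert, hjw1]
      exact max_eq_left (le_of_lt h1)
    have hDc2 : Dᶜ.sup w2 < C.sup w2 := by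
      rw [hcompl, Finset.sup_insert]
      exact max_lt hjw2 h2
    refine hmin D hDss ?_
    unfold Winning q
    rw [hD1, hD2, hDc1]
    omega
  rw [Xor']
  tauto
end

section
/- In a 2-dimensional C-WMMG, let C_1 and C_2 be minimal winning coalitions and suppose there are players x and y with x ∈ A_1(C_1) ∩ A_1(C_2) and y ∈ A_2(C_1) ∩ A_2(C_2). If A_1(C_1) = {x} and A_2(C_1) = {y}, then C_1 = C_2. -/
/-- In a 2-dim C-WMMG, if `C₁, C₂` are minimal winning coalitions with
`x ∈ A_1(C₁) ∩ A_1(C₂)`, `y ∈ A_2(C₁) ∩ A_2(C₂)`, and `A_1(C₁) = {x}`,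
`A_2(C₁) = {y}`, then `C₁ = C₂`. -/
theorem mwc_eq_of_unique_busy_pair {P : Type*} [Fintype P] [DecidableEq P]
    (w1 w2 : P → ℕ) (C₁ C₂ : Finset P)
    (h1 : MWC w1 w2 C₁) (h2 : MWC w1 w2 C₂) (x y : P)
    (hx : x ∈ Aset w1 C₁ ∩ Aset w1 C₂) (hy : y ∈ Aset w2 C₁ ∩ Aset w2 C₂)
    (hA1 : Aset w1 C₁ = {x}) (hA2 : Aset w2 C₁ = {y}) :
    C₁ = C₂ := by
  simp only [Finset.mem_inter, Aset, Finset.mem_filter] at hx hy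
  obtain ⟨⟨hx1, hx1e⟩, hx2, hx2e⟩ := hx
  obtain ⟨⟨hy1, hy1e⟩, hy2, hy2e⟩ := hy
  set a1 := C₁.sup w1 with ha1
  set a2 := C₁.sup w2 with ha2
  set s1 := C₁ᶜ.sup w1 with hs1
  set s2 := C₁ᶜ.sup w2 with hs2
  set t1 := C₂ᶜ.sup w1 with ht1
  set t2 := C₂ᶜ.sup w2 with ht2
  -- sup of C₂ equals that of C₁
  have hb1 : C₂.sup w1 = a1 := by rw [← hx2e, hx1e]
  have hb2 : C₂.sup w2 = a2 := by rw [← hy2e, hy1e]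
  have hwin1 : s1 + s2 < a1 + a2 := h1.1
  have hwin2 : t1 + t2 < a1 + a2 := by
    have := h2.1
    unfold Winning q at this
    rwa [hb1, hb2] at this
  -- C₁ ⊆ C₂
  have hsub : C₁ ⊆ C₂ := by
    intro j hj
    by_contra hj2
    have hjc : j ∈ C₂ᶜ := Finset.mem_compl.mpr hj2
    have hjx : j ≠ x := by rintro rfl; exact hj2 hx2
    have hjy : j ≠ y := by rintro rfl; exact hj2 hy2
    -- strict weight bounds
    have hw1j : w1 j < a1 := by
      refine lt_of_le_of_ne (Finset.le_sup hj) (fun h => ?_)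
      have : j ∈ Aset w1 C₁ := Finset.mem_filter.mpr ⟨hj, h⟩
      rw [hA1, Finset.mem_singleton] at this
      exact hjx this
    have hw2j : w2 j < a2 := by
      refine lt_of_le_of_ne (Finset.le_sup hj) (fun h => ?_)
      have : j ∈ Aset w2 C₁ := Finset.mem_filter.mpr ⟨hj, h⟩
      rw [hA2, Finset.mem_singleton] at this
      exact hjy this
    have hjt1 : w1 j ≤ t1 := Finset.le_sup hjc
    have hjt2 : w2 j ≤ t2 := Finset.le_sup hjc
    -- s_i ≤ max a_i t_i
    have hsle : ∀ (w : P → ℕ), C₁ᶜ.sup w ≤ max (C₂.sup w) (C₂ᶜ.sup w) := by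
      intro w
      refine Finset.sup_le fun k hk => ?_
      by_cases hk2 : k ∈ C₂
      · exact le_max_of_le_left (Finset.le_sup hk2)
      · exact le_max_of_le_right (Finset.le_sup (Finset.mem_compl.mpr hk2))
    have hs1le : s1 ≤ max a1 t1 := by have := hsle w1; rwa [hb1] at this
    have hs2le : s2 ≤ max a2 t2 := by have := hsle w2; rwa [hb2] at this
    -- minimality of C₁ applied to C₁.erase j
    have hlose := h1.2 (C₁.erase j) (Finset.erase_ssubset hj)
    unfold Winning q at hlose
    push_neg at hlose
    have he1 : (C₁.erase j).sup w1 = a1 :=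
      le_antisymm (Finset.sup_mono (Finset.erase_subset _ _))
        (hx1e ▸ Finset.le_sup (Finset.mem_erase.mpr ⟨Ne.symm hjx, hx1⟩))
    have he2 : (C₁.erase j).sup w2 = a2 :=
      le_antisymm (Finset.sup_mono (Finset.erase_subset _ _))
        (hy1e ▸ Finset.le_sup (Finset.mem_erase.mpr ⟨Ne.symm hjy, hy1⟩))
    have hec : (C₁.erase j)ᶜ = insert j C₁ᶜ := Finset.compl_erase
    rw [he1, he2, hec, Finset.sup_insert, Finset.sup_insert] at hlose
    -- now hlose : a1 + a2 ≤ (w1 j ⊔ s1) + (w2 j ⊔ s2)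
    rcases le_total (w1 j) s1 with h1' | h1' <;>
      rcases le_total (w2 j) s2 with h2' | h2' <;>
      rcases le_or_gt s1 a1 with h3 | h3 <;>
      rcases le_or_gt s2 a2 with h4 | h4 <;>
  omega
  -- conclude
  by_contra hne
  exact h2.2 C₁ (HasSubset.Subset.ssubset_of_ne hsub hne) h1.1
end
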